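/- arXiv:1812.00827 — 6 statements merged into one kernel-verified Lean document; each statement's English description precedes it below -/
import Mathlib

section
/- The map Ψ(z,w,μ) = (z² − μ·conj(w)², z·w + conj(z)·conj(w)·μ, w² − μ·conj(z)²) is injective up to the weighted ℂ*-action: if |z|²+|w|²=1=|z'|²+|w'|², |μ|,|μ'|<1, and there is λ ∈ ℂ* with Ψ(z,w,μ) = (λ^{2a₁}(z'²−μ'conj(w')²), λ^{a₁+a₂}(z'w'+conj(z'w')μ'), λ^{2a₂}(w'²−μ'conj(z')²)), then μ = λ^{2(a₁+a₂)}μ' and (z,w) = ±(λ^{a₁}z', λ^{a₂}w'). -/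
/-!
Read `Ψ(z, w, μ) = (a, b, c)` as the binary quadratic form `a p² + 2 b p q + c q²`, which equals
`(p z + q w)² − μ (p w̄ − q z̄)²`. Its discriminant `b² − a c` is `μ (|z|² + |w|²)² = μ`, and the
weighted action multiplies it by `λ^{2(a₁+a₂)}`; this gives the relation between `μ` and `μ'`.
By Lagrange's identity the form is bounded by `(|p|² + |q|²)(|z|² + |w|²)` when `|μ| ≤ 1`, and it
takes the value `1` at `(z̄, w̄)`. Evaluating the weighted relation at `(z̄, w̄)` and at
`(λ^{a₂} z̄', λ^{a₁} w̄')` bounds `|λ|` from below and from above, so `|λ| = 1`. The first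
evaluation is then an equality case of the bound, which for `|μ'| < 1` forces
`ε := λ^{a₁} z̄ z' + λ^{a₂} w̄ w'` to satisfy `ε² = 1`; equality in Cauchy–Schwarz gives
`(z, w) = ε (λ^{a₁} z', λ^{a₂} w')`.
-/

open Complex ComplexConjugate

def formEval (v : ℂ × ℂ × ℂ) (p q : ℂ) : ℂ :=
  v.1 * p ^ 2 + 2 * v.2.1 * p * q + v.2.2 * q ^ 2

def formDisc (v : ℂ × ℂ × ℂ) : ℂ :=
  v.2.1 ^ 2 - v.1 * v.2.2

def twistor (z w μ : ℂ) : ℂ × ℂ × ℂ :=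
  (z ^ 2 - μ * conj w ^ 2, z * w + conj z * conj w * μ, w ^ 2 - μ * conj z ^ 2)

def weightedScale (a₁ a₂ : ℕ) (lam : ℂ) (v : ℂ × ℂ × ℂ) : ℂ × ℂ × ℂ :=
  (lam ^ (2 * a₁) * v.1, lam ^ (a₁ + a₂) * v.2.1, lam ^ (2 * a₂) * v.2.2)

section Form

variable (v : ℂ × ℂ × ℂ) (a₁ a₂ : ℕ) (lam p q : ℂ)

lemma formEval_smul (c : ℂ) : formEval v (c * p) (c * q) = c ^ 2 * formEval v p q := by
  unfold formEval; ring

lemma formEval_weightedScale :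
    formEval (weightedScale a₁ a₂ lam v) p q = formEval v (lam ^ a₁ * p) (lam ^ a₂ * q) := by
  unfold formEval weightedScale; ring

lemma formDisc_weightedScale :
    formDisc (weightedScale a₁ a₂ lam v) = lam ^ (2 * (a₁ + a₂)) * formDisc v := by
  unfold formDisc weightedScale; ring

end Form

section Twistor

variable {z w μ : ℂ}

lemma formEval_twistor (z w μ p q : ℂ) :
    formEval (twistor z w μ) p q = (p * z + q * w) ^ 2 - μ * (p * conj w - q * conj z) ^ 2 := by
  unfold formEval twistor; ring

lemma mul_conj_add_mul_conj_eq_one (h : normSq z + normSq w = 1) :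
    z * conj z + w * conj w = 1 := by
  rw [mul_conj, mul_conj]; exact_mod_cast h

lemma formDisc_twistor (h : normSq z + normSq w = 1) : formDisc (twistor z w μ) = μ := by
  have hzw := mul_conj_add_mul_conj_eq_one h
  unfold formDisc twistor
  linear_combination μ * (z * conj z + w * conj w + 1) * hzw

lemma formEval_twistor_conj (h : normSq z + normSq w = 1) :
    formEval (twistor z w μ) (conj z) (conj w) = 1 := by
  rw [formEval_twistor]
  linear_combination (z * conj z + w * conj w + 1) * mul_conj_add_mul_conj_eq_one h

lemma normSq_lagrange (p q a b : ℂ) :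
    normSq (p * a + q * b) + normSq (p * conj b - q * conj a)
      = (normSq p + normSq q) * (normSq a + normSq b) := by
  simp only [normSq_apply, mul_re, mul_im, add_re, add_im, sub_re, sub_im, conj_re, conj_im]
  ring

lemma norm_formEval_twistor_le_normSq_add (p q : ℂ) :
    ‖formEval (twistor z w μ) p q‖
      ≤ normSq (p * z + q * w) + ‖μ‖ * normSq (p * conj w - q * conj z) := by
  rw [formEval_twistor, ← Complex.sq_norm, ← Complex.sq_norm, ← norm_pow, ← norm_pow, ← norm_mul]
  exact norm_sub_le _ _

lemma norm_formEval_twistor_le (hμ : ‖μ‖ ≤ 1) (p q : ℂ) :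
    ‖formEval (twistor z w μ) p q‖ ≤ (normSq p + normSq q) * (normSq z + normSq w) := by
  calc ‖formEval (twistor z w μ) p q‖
      ≤ normSq (p * z + q * w) + ‖μ‖ * normSq (p * conj w - q * conj z) :=
        norm_formEval_twistor_le_normSq_add p q
    _ ≤ normSq (p * z + q * w) + 1 * normSq (p * conj w - q * conj z) := by
        gcongr
        exact normSq_nonneg _
    _ = (normSq p + normSq q) * (normSq z + normSq w) := by rw [one_mul, normSq_lagrange]

lemma sq_eq_one_of_formEval_twistor_eq_one (hμ : ‖μ‖ < 1) (hzw : normSq z + normSq w = 1)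
    {p q : ℂ} (hpq : normSq p + normSq q = 1) (h : formEval (twistor z w μ) p q = 1) :
    (p * z + q * w) ^ 2 = 1 := by
  have hbound := norm_formEval_twistor_le_normSq_add (z := z) (w := w) (μ := μ) p q
  have hsum := normSq_lagrange p q z w
  rw [h, norm_one] at hbound
  rw [hpq, hzw, one_mul] at hsum
  have hB : p * conj w - q * conj z = 0 := by
    refine normSq_eq_zero.mp (le_antisymm ?_ (normSq_nonneg _))
    nlinarith [normSq_nonneg (p * conj w - q * conj z)]
  rw [formEval_twistor, hB] at h
  simpa using h

lemma mul_add_mul_le_max {u v x y : ℝ} (hx : 0 ≤ x) (hy : 0 ≤ y) (hxy : x + y = 1) :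
    u * x + v * y ≤ max u v :=
  calc u * x + v * y ≤ max u v * x + max u v * y := by
        gcongr
        exacts [le_max_left u v, le_max_right u v]
    _ = max u v := by rw [← mul_add, hxy, mul_one]

lemma norm_formEval_twistor_pow_mul_le (hμ : ‖μ‖ ≤ 1) (hzw : normSq z + normSq w = 1)
    (lam : ℂ) (m n : ℕ) {p q : ℂ} (hpq : normSq p + normSq q = 1) :
    ‖formEval (twistor z w μ) (lam ^ m * p) (lam ^ n * q)‖
      ≤ max (normSq lam ^ m) (normSq lam ^ n) := by
  refine (norm_formEval_twistor_le hμ _ _).trans ?_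
  rw [hzw, mul_one, map_mul, map_mul, map_pow, map_pow]
  exact mul_add_mul_le_max (normSq_nonneg p) (normSq_nonneg q) hpq

end Twistor

section Scalar

variable {t : ℝ} {m n : ℕ}

lemma one_le_of_one_le_max_pow (ht : 0 ≤ t) (hm : m ≠ 0) (hn : n ≠ 0)
    (h : 1 ≤ max (t ^ m) (t ^ n)) : 1 ≤ t := by
  by_contra! ht1
  exact h.not_gt (max_lt (pow_lt_one₀ ht ht1 hm) (pow_lt_one₀ ht ht1 hn))

lemma le_one_of_pow_add_le_max_pow (hm : m ≠ 0) (hn : n ≠ 0)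
    (h : t ^ (m + n) ≤ max (t ^ m) (t ^ n)) : t ≤ 1 := by
  by_contra! ht1
  refine h.not_gt (max_lt (pow_lt_pow_right₀ ht1 ?_) (pow_lt_pow_right₀ ht1 ?_)) <;> omega

end Scalar

lemma formEval_twistor_pow_mul_conj_eq_one {a₁ a₂ : ℕ} {z w μ z' w' μ' lam : ℂ}
    (hs : normSq z + normSq w = 1)
    (h : twistor z w μ = weightedScale a₁ a₂ lam (twistor z' w' μ')) :
    formEval (twistor z' w' μ') (lam ^ a₁ * conj z) (lam ^ a₂ * conj w) = 1 := by
  rw [← formEval_weightedScale, ← h, formEval_twistor_conj hs]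

lemma normSq_eq_one_of_twistor_eq_weightedScale {a₁ a₂ : ℕ} {z w μ z' w' μ' lam : ℂ}
    (ha₁ : a₁ ≠ 0) (ha₂ : a₂ ≠ 0)
    (hs : normSq z + normSq w = 1) (hs' : normSq z' + normSq w' = 1)
    (hμ : ‖μ‖ ≤ 1) (hμ' : ‖μ'‖ ≤ 1)
    (h : twistor z w μ = weightedScale a₁ a₂ lam (twistor z' w' μ')) :
    normSq lam = 1 := by
  have hconj (a b : ℂ) (hab : normSq a + normSq b = 1) : normSq (conj a) + normSq (conj b) = 1 := by
    rwa [normSq_conj, normSq_conj]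
  have hupper : normSq lam ^ (a₂ + a₁) ≤ max (normSq lam ^ a₂) (normSq lam ^ a₁) := by
    have hvalue : formEval (twistor z w μ) (lam ^ a₂ * conj z') (lam ^ a₁ * conj w')
        = (lam ^ (a₂ + a₁)) ^ 2 := by
      rw [h, formEval_weightedScale, ← mul_assoc, ← mul_assoc, ← pow_add, ← pow_add, add_comm a₁,
        formEval_smul, formEval_twistor_conj hs', mul_one]
    have hbound := norm_formEval_twistor_pow_mul_le hμ hs lam a₂ a₁ (hconj z' w' hs')
    rwa [hvalue, norm_pow, Complex.sq_norm, map_pow] at hbound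
  have hlower : 1 ≤ max (normSq lam ^ a₁) (normSq lam ^ a₂) := by
    simpa [formEval_twistor_pow_mul_conj_eq_one hs h] using
      norm_formEval_twistor_pow_mul_le hμ' hs' lam a₁ a₂ (hconj z w hs)
  exact le_antisymm (le_one_of_pow_add_le_max_pow ha₂ ha₁ hupper)
    (one_le_of_one_le_max_pow (normSq_nonneg lam) ha₁ ha₂ hlower)

lemma eq_of_conj_mul_add_conj_mul_eq_one {z w x y : ℂ} (hzw : normSq z + normSq w = 1)
    (hxy : normSq x + normSq y = 1) (h : conj z * x + conj w * y = 1) : z = x ∧ w = y := by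
  have h0 : ((normSq (z - x) + normSq (w - y) : ℝ) : ℂ) = 0 := by
    push_cast
    rw [← mul_conj, ← mul_conj, map_sub, map_sub]
    have hc := congrArg conj h
    simp only [map_add, map_mul, conj_conj, map_one] at hc
    linear_combination mul_conj_add_mul_conj_eq_one hzw + mul_conj_add_mul_conj_eq_one hxy - h - hc
  have h0' : normSq (z - x) + normSq (w - y) = 0 := by exact_mod_cast h0
  obtain ⟨hz, hw⟩ := (add_eq_zero_iff_of_nonneg (normSq_nonneg _) (normSq_nonneg _)).mp h0'
  exact ⟨sub_eq_zero.mp (normSq_eq_zero.mp hz), sub_eq_zero.mp (normSq_eq_zero.mp hw)⟩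

theorem twistor_map_injective_general (a₁ a₂ : ℕ) (h2 : 0 < a₂) (hle : a₂ ≤ a₁)
    (z w z' w' μ μ' lam : ℂ)
    (hs : normSq z + normSq w = 1)
    (hs' : normSq z' + normSq w' = 1)
    (hμ : ‖μ‖ < 1) (hμ' : ‖μ'‖ < 1)
    (h₁ : z^2 - μ * (starRingEnd ℂ) w ^ 2
        = lam ^ (2*a₁) * (z'^2 - μ' * (starRingEnd ℂ) w' ^ 2))
    (h₂ : z*w + (starRingEnd ℂ) z * (starRingEnd ℂ) w * μ
        = lam ^ (a₁+a₂) * (z'*w' + (starRingEnd ℂ) z' * (starRingEnd ℂ) w' * μ'))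
    (h₃ : w^2 - μ * (starRingEnd ℂ) z ^ 2
        = lam ^ (2*a₂) * (w'^2 - μ' * (starRingEnd ℂ) z' ^ 2)) :
    μ = lam ^ (2*(a₁+a₂)) * μ' ∧
    ∃ ε : ℂ, (ε = 1 ∨ ε = -1) ∧ z = ε * lam ^ a₁ * z' ∧ w = ε * lam ^ a₂ * w' := by
  have h : twistor z w μ = weightedScale a₁ a₂ lam (twistor z' w' μ') :=
    Prod.ext h₁ (Prod.ext h₂ h₃)
  refine ⟨?_, ?_⟩
  · rw [← formDisc_twistor (μ := μ) hs, h, formDisc_weightedScale, formDisc_twistor hs']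
  have hlam_unit : normSq lam = 1 :=
    normSq_eq_one_of_twistor_eq_weightedScale (by omega) h2.ne' hs hs' hμ.le hμ'.le h
  have hA : (lam ^ a₁ * conj z * z' + lam ^ a₂ * conj w * w') ^ 2 = 1 := by
    refine sq_eq_one_of_formEval_twistor_eq_one hμ' hs' ?_
      (formEval_twistor_pow_mul_conj_eq_one hs h)
    simpa [hlam_unit] using hs
  set ε := lam ^ a₁ * conj z * z' + lam ^ a₂ * conj w * w'
  have hε : ε = 1 ∨ ε = -1 := sq_eq_one_iff.mp hA
  have hεnorm : normSq ε = 1 := by rcases hε with hε | hε <;> simp [hε]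
  obtain ⟨hz, hw⟩ := eq_of_conj_mul_add_conj_mul_eq_one (x := ε * lam ^ a₁ * z')
    (y := ε * lam ^ a₂ * w') hs (by simpa [hεnorm, hlam_unit] using hs') (by linear_combination hA)
  exact ⟨ε, hε, hz, hw⟩

/-- The twistor map
`Ψ(z,w,μ) = (z² − μ conj(w)², zw + conj(z)conj(w) μ, w² − μ conj(z)²)` is injective up to the
weighted `ℂ*`-action with weights `(2a₁, a₁+a₂, 2a₂)`: if `|z|²+|w|² = 1 = |z'|²+|w'|²`,
`|μ|, |μ'| < 1` and `λ ∈ ℂ*` is such that `Ψ(z,w,μ) = λ·Ψ(z',w',μ')` (weighted), then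
`μ = λ^{2(a₁+a₂)} μ'` and `(z,w) = ±(λ^{a₁} z', λ^{a₂} w')`. -/
theorem twistor_map_injective (a₁ a₂ : ℕ) (h2 : 0 < a₂) (hle : a₂ ≤ a₁)
    (hcop : Nat.Coprime a₁ a₂)
    (z w z' w' μ μ' lam : ℂ)
    (hs : normSq z + normSq w = 1)
    (hs' : normSq z' + normSq w' = 1)
    (hμ : ‖μ‖ < 1) (hμ' : ‖μ'‖ < 1) (hlam : lam ≠ 0)
    (h₁ : z^2 - μ * (starRingEnd ℂ) w ^ 2
        = lam ^ (2*a₁) * (z'^2 - μ' * (starRingEnd ℂ) w' ^ 2))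
    (h₂ : z*w + (starRingEnd ℂ) z * (starRingEnd ℂ) w * μ
        = lam ^ (a₁+a₂) * (z'*w' + (starRingEnd ℂ) z' * (starRingEnd ℂ) w' * μ'))
    (h₃ : w^2 - μ * (starRingEnd ℂ) z ^ 2
        = lam ^ (2*a₂) * (w'^2 - μ' * (starRingEnd ℂ) z' ^ 2)) :
    μ = lam ^ (2*(a₁+a₂)) * μ' ∧
    ∃ ε : ℂ, (ε = 1 ∨ ε = -1) ∧ z = ε * lam ^ a₁ * z' ∧ w = ε * lam ^ a₂ * w' :=
  twistor_map_injective_general a₁ a₂ h2 hle z w z' w' μ μ' lam hs hs' hμ hμ' h₁ h₂ h₃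
end

section
/- The real Jacobian determinant of the map ℂ²×ℂ → ℂ³, (z,w,μ) ↦ (z²−μconj(w)², zw+conj(z)conj(w)μ, w²−μconj(z)²), restricted appropriately, is 4(1−|μ|²)(|z|²+|w|²)⁴; in particular the map is an immersion at every point with |μ| < 1 and (z,w) ≠ (0,0). -/
/-!
For `z, w ∈ ℂ` let `g = [[z, -conj w], [w, conj z]]`, a positive multiple of an `SU(2)` matrix
when `(z, w) ≠ 0`. Then `Ψ(g (a, b), μ) = Sym²g · Ψ(a, b, μ)`, and differentiating at `(1, 0, μ)`
gives `dΨ_(z,w,μ) ∘ g = Sym²g ∘ dΨ_(1,0,μ)`. Both `g` and `Sym²g` are `ℂ`-linear, with complex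
determinants `r²` and `r⁶` where `r² = |z|² + |w|²`, hence real determinants `r⁴` and `r¹²`
(the real determinant of a `ℂ`-linear map is `|det_ℂ|²`).
At `(1, 0, μ)` the differential `(a, b, c) ↦ (2a, b + μ b̄, -c - 2μ ā)` is block triangular with
determinant `4 (1 - |μ|²)`. So `det dΨ_(z,w,μ) · r⁴ = r¹² · 4 (1 - |μ|²)`, and at `z = w = 0`
the differential vanishes.
-/

open Complex

/-- The twistor map `Ψ(z,w,μ) = (z² − μ conj(w)², zw + conj(z)conj(w)μ, w² − μ conj(z)²)`,
viewed as a smooth (but not holomorphic) map `ℝ⁶ ≅ ℂ×ℂ×ℂ → ℂ×ℂ×ℂ ≅ ℝ⁶`. -/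
noncomputable def twistorPsi : ℂ × ℂ × ℂ → ℂ × ℂ × ℂ := fun p =>
  (p.1^2 - p.2.2 * (starRingEnd ℂ) p.2.1 ^ 2,
   p.1 * p.2.1 + (starRingEnd ℂ) p.1 * (starRingEnd ℂ) p.2.1 * p.2.2,
   p.2.1^2 - p.2.2 * (starRingEnd ℂ) p.1 ^ 2)

open ComplexConjugate
open scoped Matrix

theorem LinearMap.det_eq_det_of_apply_eq_mulVec {R M ι : Type*} [CommRing R] [AddCommGroup M]
    [Module R M] [Fintype ι] [DecidableEq ι] (e : M ≃ₗ[R] ι → R) {f : M →ₗ[R] M}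
    {A : Matrix ι ι R} (h : ∀ v, e (f v) = A *ᵥ e v) : f.det = A.det := by
  rw [← LinearMap.det_conj f e, ← LinearMap.det_toLin' A]
  congr 1
  ext x
  simp [h]

theorem LinearMap.det_eq_mul_of_blockLowerTriangular {R M₁ M₂ : Type*} [CommRing R]
    [AddCommGroup M₁] [Module R M₁] [Module.Free R M₁] [Module.Finite R M₁] [AddCommGroup M₂]
    [Module R M₂] [Module.Free R M₂] [Module.Finite R M₂] {f : M₁ × M₂ →ₗ[R] M₁ × M₂}
    {A : M₁ →ₗ[R] M₁} {C : M₁ →ₗ[R] M₂} {D : M₂ →ₗ[R] M₂}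
    (hf : ∀ x y, f (x, y) = (A x, C x + D y)) :
    f.det = A.det * D.det := by
  classical
  let b₁ := Module.Free.chooseBasis R M₁
  let b₂ := Module.Free.chooseBasis R M₂
  have hblocks : LinearMap.toMatrix (b₁.prod b₂) (b₁.prod b₂) f =
      Matrix.fromBlocks (LinearMap.toMatrix b₁ b₁ A) 0 (LinearMap.toMatrix b₁ b₂ C)
        (LinearMap.toMatrix b₂ b₂ D) := by
    ext (i | i) (j | j) <;> simp [LinearMap.toMatrix_apply, hf]
  rw [← LinearMap.det_toMatrix (b₁.prod b₂), hblocks, Matrix.det_fromBlocks_zero₁₂,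
    LinearMap.det_toMatrix, LinearMap.det_toMatrix]

def LinearEquiv.prodProdFinThree (R : Type*) [Semiring R] : (R × R × R) ≃ₗ[R] (Fin 3 → R) where
  toFun p := ![p.1, p.2.1, p.2.2]
  invFun x := (x 0, x 1, x 2)
  map_add' _ _ := by ext i; fin_cases i <;> rfl
  map_smul' _ _ := by ext i; fin_cases i <;> rfl
  left_inv _ := rfl
  right_inv x := by ext i; fin_cases i <;> rfl

@[simp]
theorem LinearEquiv.prodProdFinThree_apply {R : Type*} [Semiring R] (p : R × R × R) :
    prodProdFinThree R p = ![p.1, p.2.1, p.2.2] := rfl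

theorem Complex.normSq_add_normSq_eq_zero {z w : ℂ} :
    normSq z + normSq w = 0 ↔ z = 0 ∧ w = 0 := by
  rw [add_eq_zero_iff_of_nonneg (normSq_nonneg z) (normSq_nonneg w), normSq_eq_zero,
    normSq_eq_zero]

def Complex.mulAddMulConj (a b : ℂ) : ℂ →ₗ[ℝ] ℂ :=
  a • LinearMap.id + b • (conjAe.toLinearMap : ℂ →ₗ[ℝ] ℂ)

theorem Complex.mulAddMulConj_apply (a b x : ℂ) : mulAddMulConj a b x = a * x + b * conj x := rfl

theorem Complex.det_mulAddMulConj (a b : ℂ) :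
    (mulAddMulConj a b).det = normSq a - normSq b := by
  rw [← LinearMap.det_toMatrix basisOneI, Matrix.det_fin_two]
  simp only [LinearMap.toMatrix_apply, coe_basisOneI, coe_basisOneI_repr, mulAddMulConj_apply,
    Matrix.cons_val_zero, Matrix.cons_val_one, Matrix.cons_val_fin_one, map_one, conj_I, mul_re,
    mul_im, add_re, add_im, one_re, one_im, neg_re, neg_im, I_re, I_im, normSq_apply]
  ring

def suTwoAct (z w : ℂ) : ℂ × ℂ × ℂ →ₗ[ℂ] ℂ × ℂ × ℂ where
  toFun p := (z * p.1 - conj w * p.2.1, w * p.1 + conj z * p.2.1, p.2.2)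
  map_add' _ _ := by ext <;> simp only [Prod.fst_add, Prod.snd_add] <;> ring
  map_smul' _ _ := by
    ext <;> simp only [Prod.smul_fst, Prod.smul_snd, smul_eq_mul, RingHom.id_apply] <;> ring

/-- The symmetric square of the matrix of `suTwoAct z w`, in the basis `x², xy, y²`. -/
def suTwoSymSqAct (z w : ℂ) : ℂ × ℂ × ℂ →ₗ[ℂ] ℂ × ℂ × ℂ where
  toFun u := (z ^ 2 * u.1 - 2 * z * conj w * u.2.1 + conj w ^ 2 * u.2.2,
    z * w * u.1 + (z * conj z - w * conj w) * u.2.1 - conj z * conj w * u.2.2,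
    w ^ 2 * u.1 + 2 * w * conj z * u.2.1 + conj z ^ 2 * u.2.2)
  map_add' _ _ := by ext <;> simp only [Prod.fst_add, Prod.snd_add] <;> ring
  map_smul' _ _ := by
    ext <;> simp only [Prod.smul_fst, Prod.smul_snd, smul_eq_mul, RingHom.id_apply] <;> ring

theorem det_suTwoAct (z w : ℂ) : (suTwoAct z w).det = z * conj z + w * conj w := by
  rw [LinearMap.det_eq_det_of_apply_eq_mulVec (LinearEquiv.prodProdFinThree ℂ)
    (A := !![z, -conj w, 0; w, conj z, 0; 0, 0, 1])]
  · simp only [Matrix.det_fin_three, Matrix.of_apply, Matrix.cons_val', Matrix.cons_val_zero,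
      Matrix.cons_val_one, Matrix.cons_val, Matrix.cons_val_fin_one]
    ring
  · intro v
    simp only [suTwoAct, LinearMap.coe_mk, AddHom.coe_mk, LinearEquiv.prodProdFinThree_apply,
      Matrix.cons_mulVec, Matrix.vec3_dotProduct', Matrix.empty_mulVec]
    ring_nf

theorem det_suTwoSymSqAct (z w : ℂ) :
    (suTwoSymSqAct z w).det = (z * conj z + w * conj w) ^ 3 := by
  rw [LinearMap.det_eq_det_of_apply_eq_mulVec (LinearEquiv.prodProdFinThree ℂ)
    (A := !![z ^ 2, -2 * z * conj w, conj w ^ 2;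
      z * w, z * conj z - w * conj w, -conj z * conj w;
      w ^ 2, 2 * w * conj z, conj z ^ 2])]
  · simp only [Matrix.det_fin_three, Matrix.of_apply, Matrix.cons_val', Matrix.cons_val_zero,
      Matrix.cons_val_one, Matrix.cons_val, Matrix.cons_val_fin_one]
    ring
  · intro v
    simp only [suTwoSymSqAct, LinearMap.coe_mk, AddHom.coe_mk, LinearEquiv.prodProdFinThree_apply,
      Matrix.cons_mulVec, Matrix.vec3_dotProduct', Matrix.empty_mulVec]
    ring_nf

theorem twistorPsi_suTwoAct (z w : ℂ) (p : ℂ × ℂ × ℂ) :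
    twistorPsi (suTwoAct z w p) = suTwoSymSqAct z w (twistorPsi p) := by
  simp only [twistorPsi, suTwoAct, suTwoSymSqAct, LinearMap.coe_mk, AddHom.coe_mk, map_add,
    map_sub, map_mul, conj_conj, Prod.mk.injEq]
  refine ⟨by ring, by ring, by ring⟩

theorem differentiable_twistorPsi : Differentiable ℝ twistorPsi := by
  unfold twistorPsi
  fun_prop

theorem fderiv_twistorPsi_apply (z w μ a b c : ℂ) :
    fderiv ℝ twistorPsi (z, w, μ) (a, b, c) =
      (2 * z * a - 2 * μ * conj w * conj b - conj w ^ 2 * c,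
       w * a + z * b + μ * (conj w * conj a + conj z * conj b) + conj z * conj w * c,
       2 * w * b - 2 * μ * conj z * conj a - conj z ^ 2 * c) := by
  set p : ℂ × ℂ × ℂ := (z, w, μ)
  have h₁ : HasFDerivAt (fun q : ℂ × ℂ × ℂ ↦ q.1) _ p := hasFDerivAt_fst (𝕜 := ℝ)
  have h₂ : HasFDerivAt (fun q : ℂ × ℂ × ℂ ↦ q.2.1) _ p := (hasFDerivAt_snd (𝕜 := ℝ)).fst
  have h₃ : HasFDerivAt (fun q : ℂ × ℂ × ℂ ↦ q.2.2) _ p := (hasFDerivAt_snd (𝕜 := ℝ)).snd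
  have c₁ := conjCLE.hasFDerivAt.comp p h₁
  have c₂ := conjCLE.hasFDerivAt.comp p h₂
  have H : HasFDerivAt twistorPsi _ p := ((h₁.pow 2).sub (h₃.mul (c₂.pow 2))).prodMk
    (((h₁.mul h₂).add ((c₁.mul c₂).mul h₃)).prodMk ((h₂.pow 2).sub (h₃.mul (c₁.pow 2))))
  rw [H.fderiv]
  simp only [p, ContinuousLinearMap.prod_apply, add_apply, sub_apply, smul_apply,
    ContinuousLinearMap.comp_apply, ContinuousLinearMap.coe_fst', ContinuousLinearMap.coe_snd',
    ContinuousLinearEquiv.coe_coe, conjCLE_apply, Function.comp_apply, Pi.mul_apply, smul_eq_mul,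
    nsmul_eq_mul, Prod.mk.injEq]
  refine ⟨by ring, by ring, by ring⟩

theorem fderiv_twistorPsi_zero_zero (μ : ℂ) : fderiv ℝ twistorPsi (0, 0, μ) = 0 :=
  ContinuousLinearMap.ext fun ⟨a, b, c⟩ ↦ by simp [fderiv_twistorPsi_apply]

theorem det_fderiv_twistorPsi_one_zero (μ : ℂ) :
    (fderiv ℝ twistorPsi (1, 0, μ)).toLinearMap.det = 4 * (1 - normSq μ) := by
  rw [LinearMap.det_eq_mul_of_blockLowerTriangular (A := mulAddMulConj 2 0)
    (C := LinearMap.inr ℝ ℂ ℂ ∘ₗ mulAddMulConj 0 (-2 * μ))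
    (D := (mulAddMulConj 1 μ).prodMap (mulAddMulConj (-1) 0)), LinearMap.det_prodMap,
    det_mulAddMulConj, det_mulAddMulConj, det_mulAddMulConj]
  · norm_num
  · rintro a ⟨b, c⟩
    simp only [ContinuousLinearMap.coe_coe, fderiv_twistorPsi_apply, mulAddMulConj_apply,
      LinearMap.coe_comp, LinearMap.coe_inr, Function.comp_apply, LinearMap.prodMap_apply,
      Prod.mk_add_mk, Prod.mk.injEq, map_zero, map_one]
    refine ⟨by ring, by ring, by ring⟩

theorem fderiv_twistorPsi_comp_suTwoAct (z w μ : ℂ) :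
    (fderiv ℝ twistorPsi (z, w, μ)).toLinearMap ∘ₗ (suTwoAct z w).restrictScalars ℝ =
      (suTwoSymSqAct z w).restrictScalars ℝ ∘ₗ (fderiv ℝ twistorPsi (1, 0, μ)).toLinearMap := by
  let G := ((suTwoAct z w).restrictScalars ℝ).toContinuousLinearMap
  let S := ((suTwoSymSqAct z w).restrictScalars ℝ).toContinuousLinearMap
  have hG : G (1, 0, μ) = (z, w, μ) := by simp [G, suTwoAct]
  have hΨG := (differentiable_twistorPsi (G (1, 0, μ))).hasFDerivAt.comp (1, 0, μ) G.hasFDerivAt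
  have hSΨ := S.hasFDerivAt.comp (1, 0, μ) (differentiable_twistorPsi (1, 0, μ)).hasFDerivAt
  rw [show twistorPsi ∘ G = S ∘ twistorPsi from funext (twistorPsi_suTwoAct z w), hG] at hΨG
  exact congrArg ContinuousLinearMap.toLinearMap (hΨG.unique hSΨ)

theorem det_fderiv_twistorPsi (z w μ : ℂ) :
    (fderiv ℝ twistorPsi (z, w, μ)).toLinearMap.det
      = 4 * (1 - normSq μ) * (normSq z + normSq w) ^ 4 := by
  rcases eq_or_ne (normSq z + normSq w) 0 with h | h
  · obtain ⟨rfl, rfl⟩ := normSq_add_normSq_eq_zero.mp h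
    simp [fderiv_twistorPsi_zero_zero]
  have key := congrArg LinearMap.det (fderiv_twistorPsi_comp_suTwoAct z w μ)
  rw [LinearMap.det_comp, LinearMap.det_comp, LinearMap.det_restrictScalars,
    LinearMap.det_restrictScalars, Algebra.norm_complex_apply, Algebra.norm_complex_apply,
    det_suTwoAct, det_suTwoSymSqAct, det_fderiv_twistorPsi_one_zero, mul_conj, mul_conj,
    ← ofReal_add, ← ofReal_pow, normSq_ofReal, normSq_ofReal] at key
  apply mul_right_cancel₀ (pow_ne_zero 2 h)
  linear_combination key

/-- The real Jacobian determinant of `Ψ` at `(z,w,μ)` is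
`4(1 − |μ|²)(|z|² + |w|²)⁴`; in particular the map is an immersion at every point with
`|μ| < 1` and `(z,w) ≠ (0,0)`. -/
theorem twistorPsi_jacobian_det (z w μ : ℂ) :
    LinearMap.det ((fderiv ℝ twistorPsi (z, w, μ)).toLinearMap)
      = 4 * (1 - normSq μ) * (normSq z + normSq w)^4 ∧
    (‖μ‖ < 1 → (z, w) ≠ (0, 0) →
      Function.Injective (fderiv ℝ twistorPsi (z, w, μ))) := by
  refine ⟨det_fderiv_twistorPsi z w μ, fun hμ hzw ↦ ?_⟩
  have hr : normSq z + normSq w ≠ 0 := fun h ↦ hzw (by simp [normSq_add_normSq_eq_zero.mp h])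
  have hμ' : normSq μ < 1 := by
    rw [normSq_eq_norm_sq]
    exact pow_lt_one₀ (norm_nonneg μ) hμ two_ne_zero
  have hdet : (fderiv ℝ twistorPsi (z, w, μ)).toLinearMap.det ≠ 0 := by
    rw [det_fderiv_twistorPsi]
    exact mul_ne_zero (mul_ne_zero four_ne_zero (sub_ne_zero.mpr hμ'.ne')) (pow_ne_zero 4 hr)
  exact ((Module.End.isUnit_iff _).mp
    ((LinearMap.isUnit_iff_isUnit_det _).mpr hdet.isUnit)).injective
end

section
/- Surjectivity normalization, case μ = −1, degenerate: if z₁ = conj(z₃) and |z₁| > 1, then with F(λ) = λ^{a₁}|z₁ − λ^{2a₂}conj(z₃)| + λ^{a₂}|z₃ − λ^{2a₁}conj(z₁)| and G(λ) = 1 − λ^{2(a₁+a₂)} one has F(1) = G(1) = 0, F'(1) = −2|z₁|(a₁+a₂) < G'(1) = −2(a₁+a₂), and hence there exists λ ∈ (0,1) with F(λ) = G(λ). -/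
/-! On `[0, 1]` both moduli factor through `|z₁|`, so `F = |z₁| · p` for the polynomial
`p(λ) = λ^{a₁}(1 - λ^{2a₂}) + λ^{a₂}(1 - λ^{2a₁})`, and `p'(1) = -2(a₁ + a₂)`. Hence `F - G`
vanishes at `1` with negative left derivative, so it is positive just left of `1`, while
`(F - G)(0) = -1`; the intermediate value theorem gives the crossing. -/

open Set Filter Topology

section LeftOfRoot

variable {f : ℝ → ℝ} {f' a b : ℝ}

lemma HasDerivWithinAt.eventually_gt_nhdsLT_of_neg {x : ℝ}
    (hf : HasDerivWithinAt f f' (Iic x) x) (hf' : f' < 0) : ∀ᶠ z in 𝓝[<] x, f x < f z := by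
  have hslope := hf.limsup_slope_le hf'
  rw [Iic_sdiff_right] at hslope
  filter_upwards [hslope, self_mem_nhdsWithin] with z hz hzx
  rw [slope_def_field, div_neg_iff] at hz
  rcases hz with ⟨h, -⟩ | ⟨-, h⟩
  · linarith
  · linarith [mem_Iio.mp hzx]

lemma exists_mem_Ioo_eq_zero_of_hasDerivWithinAt_neg (hab : a < b)
    (hf : ContinuousOn f (Icc a b)) (ha : f a < 0) (hb : f b = 0)
    (hd : HasDerivWithinAt f f' (Iic b) b) (hf' : f' < 0) : ∃ c ∈ Ioo a b, f c = 0 := by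
  obtain ⟨c₀, hc₀pos, hc₀⟩ :=
    ((hd.eventually_gt_nhdsLT_of_neg hf').and (Ioo_mem_nhdsLT hab)).exists
  rw [hb] at hc₀pos
  obtain ⟨c, hc, hfc⟩ := intermediate_value_Ioo hc₀.1.le
    (hf.mono (Icc_subset_Icc_right hc₀.2.le)) ⟨ha, hc₀pos⟩
  exact ⟨c, ⟨hc.1, hc.2.trans hc₀.2⟩, hfc⟩

end LeftOfRoot

lemma Complex.norm_sub_ofReal_mul_self (z : ℂ) {t : ℝ} (ht : t ≤ 1) :
    ‖z - t * z‖ = ‖z‖ * (1 - t) := by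
  rw [← one_sub_mul, mul_comm, norm_mul, ← ofReal_one, ← ofReal_sub, norm_real,
    Real.norm_of_nonneg (sub_nonneg.mpr ht)]

lemma hasDerivAt_one_sub_pow_one (n : ℕ) : HasDerivAt (fun l : ℝ => 1 - l ^ n) (-n) 1 := by
  simpa using ((hasDerivAt_pow n (1 : ℝ)).const_sub 1)

lemma hasDerivAt_pow_mul_one_sub_pow_one (m n : ℕ) :
    HasDerivAt (fun l : ℝ => l ^ m * (1 - l ^ n)) (-n) 1 := by
  simpa using (hasDerivAt_pow m (1 : ℝ)).fun_mul (hasDerivAt_one_sub_pow_one n)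

/-- (Surjectivity normalization, case `μ = −1`, degenerate.) If
`z₃ = conj(z₁)` and `|z₁| > 1`, then with
`F(λ) = λ^{a₁}|z₁ − λ^{2a₂} conj(z₃)| + λ^{a₂}|z₃ − λ^{2a₁} conj(z₁)|` and
`G(λ) = 1 − λ^{2(a₁+a₂)}` one has `F(1) = G(1) = 0`, the (one-sided, within `(-∞,1]`)
derivatives at `1` satisfy `F'(1) = −2|z₁|(a₁+a₂) < G'(1) = −2(a₁+a₂)`, and there exists
`λ ∈ (0,1)` with `F(λ) = G(λ)`. -/
theorem surjectivity_normalization_mu_neg_one_degenerate (a₁ a₂ : ℕ)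
    (h1 : 0 < a₁) (h2 : 0 < a₂)
    (z₁ z₃ : ℂ) (hz : 1 < ‖z₁‖) (hconj : z₃ = (starRingEnd ℂ) z₁)
    (F G : ℝ → ℝ)
    (hF : ∀ lam : ℝ, F lam
      = lam ^ a₁ * ‖z₁ - (lam : ℂ) ^ (2*a₂) * (starRingEnd ℂ) z₃‖
        + lam ^ a₂ * ‖z₃ - (lam : ℂ) ^ (2*a₁) * (starRingEnd ℂ) z₁‖)
    (hG : ∀ lam : ℝ, G lam = 1 - lam ^ (2*(a₁+a₂))) :
    F 1 = 0 ∧ G 1 = 0 ∧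
    HasDerivWithinAt F (-2 * ‖z₁‖ * (a₁ + a₂)) (Set.Iic 1) 1 ∧
    HasDerivWithinAt G (-2 * (a₁ + a₂)) (Set.Iic 1) 1 ∧
    (-2 * ‖z₁‖ * (a₁ + a₂) : ℝ) < -2 * (a₁ + a₂) ∧
    ∃ lam ∈ Set.Ioo (0:ℝ) 1, F lam = G lam := by
  have hFeq : EqOn F (fun l => ‖z₁‖ * (l ^ a₁ * (1 - l ^ (2*a₂)) + l ^ a₂ * (1 - l ^ (2*a₁))))
      (Icc 0 1) := fun l hl => by
    have hpow (n : ℕ) : l ^ n ≤ 1 := pow_le_one₀ hl.1 hl.2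
    simp only [hF, hconj, Complex.conj_conj]
    rw [← Complex.ofReal_pow, ← Complex.ofReal_pow, Complex.norm_sub_ofReal_mul_self _ (hpow _),
      Complex.norm_sub_ofReal_mul_self _ (hpow _), Complex.norm_conj]
    ring
  have hF1' := hFeq (right_mem_Icc.mpr zero_le_one)
  have hF1 : F 1 = 0 := by simp [hF1']
  have hG1 : G 1 = 0 := by simp [hG]
  have hFd : HasDerivWithinAt F (-2 * ‖z₁‖ * (a₁ + a₂)) (Iic 1) 1 := by
    have hp := ((hasDerivAt_pow_mul_one_sub_pow_one a₁ (2*a₂)).add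
      (hasDerivAt_pow_mul_one_sub_pow_one a₂ (2*a₁))).const_mul ‖z₁‖
    refine (hp.hasDerivWithinAt.congr_of_eventuallyEq
      (eventually_of_mem (Icc_mem_nhdsLE zero_lt_one) hFeq) hF1').congr_deriv ?_
    push_cast; ring
  have hGd : HasDerivWithinAt G (-2 * (a₁ + a₂)) (Iic 1) 1 := by
    rw [funext hG]
    exact (hasDerivAt_one_sub_pow_one _).hasDerivWithinAt.congr_deriv (by push_cast; ring)
  have hlt : (-2 * ‖z₁‖ * (a₁ + a₂) : ℝ) < -2 * (a₁ + a₂) := by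
    have : (0 : ℝ) < a₁ + a₂ := by positivity
    nlinarith
  refine ⟨hF1, hG1, hFd, hGd, hlt, ?_⟩
  have hcont : Continuous (F - G) := by
    rw [funext hF, funext hG]; fun_prop
  have h0 : (F - G) 0 < 0 := by simp [hF, hG, h1.ne', h2.ne']
  obtain ⟨l, hl, hFG⟩ := exists_mem_Ioo_eq_zero_of_hasDerivWithinAt_neg zero_lt_one
    hcont.continuousOn h0 (by simp [hF1, hG1]) (hFd.sub hGd) (by linarith)
  exact ⟨l, hl, sub_eq_zero.mp hFG⟩
end

section
/- Under the circle action T_{e^{iθ}}(z,w) = (e^{−ia₁θ}z, e^{−ia₂θ}w) on S³ ⊂ ℂ², the 1-form ω = 𝒰(z dw − w dz) − i(a₁−a₂)zw · i(conj(z)dz + conj(w)dw), where 𝒰 = a₁|z|² + a₂|w|², transforms as T_{e^{iθ}}*ω = e^{−i(a₁+a₂)θ}ω, while ζ = κ/𝒰 with κ = i(conj(z)dz + conj(w)dw) is invariant: T_{e^{iθ}}*ζ = ζ. -/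
open Complex

/-- `𝒰 = a₁|z|² + a₂|w|²`. -/
noncomputable def Ucal (a₁ a₂ : ℕ) (z w : ℂ) : ℂ :=
  (a₁ : ℂ) * normSq z + (a₂ : ℂ) * normSq w

/-- `𝒱 = i(a₁ − a₂) z w`. -/
noncomputable def Vcal (a₁ a₂ : ℕ) (z w : ℂ) : ℂ :=
  Complex.I * ((a₁ : ℂ) - (a₂ : ℂ)) * z * w

/-- The Maurer–Cartan component `φ = z dw − w dz`, evaluated at the point `(z,w)` on the
vector `(v₁,v₂)`. -/
noncomputable def phiForm (z w v₁ v₂ : ℂ) : ℂ := z * v₂ - w * v₁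

/-- The Maurer–Cartan component `κ = i(conj(z) dz + conj(w) dw)`. -/
noncomputable def kappaForm (z w v₁ v₂ : ℂ) : ℂ :=
  Complex.I * ((starRingEnd ℂ) z * v₁ + (starRingEnd ℂ) w * v₂)

/-- `ω = 𝒰 φ − 𝒱 κ`. -/
noncomputable def omegaForm (a₁ a₂ : ℕ) (z w v₁ v₂ : ℂ) : ℂ :=
  Ucal a₁ a₂ z w * phiForm z w v₁ v₂ - Vcal a₁ a₂ z w * kappaForm z w v₁ v₂

/-- Under the circle action
`T_{e^{iθ}}(z,w) = (e^{−i a₁ θ} z, e^{−i a₂ θ} w)` on `S³ ⊂ ℂ²` (whose differential acts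
the same way on tangent vectors), the 1-form `ω = 𝒰 φ − 𝒱 κ` transforms as
`T_{e^{iθ}}^* ω = e^{−i(a₁+a₂)θ} ω`, while `ζ = κ / 𝒰` is invariant. -/
theorem omega_zeta_equivariance (a₁ a₂ : ℕ) (h1 : 0 < a₁) (h2 : 0 < a₂) (θ : ℝ)
    (z w v₁ v₂ : ℂ) (hs : normSq z + normSq w = 1) :
    omegaForm a₁ a₂
        (Complex.exp (-(Complex.I * a₁ * θ)) * z) (Complex.exp (-(Complex.I * a₂ * θ)) * w)
        (Complex.exp (-(Complex.I * a₁ * θ)) * v₁) (Complex.exp (-(Complex.I * a₂ * θ)) * v₂)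
      = Complex.exp (-(Complex.I * ((a₁ : ℂ) + a₂) * θ)) * omegaForm a₁ a₂ z w v₁ v₂ ∧
    kappaForm
        (Complex.exp (-(Complex.I * a₁ * θ)) * z) (Complex.exp (-(Complex.I * a₂ * θ)) * w)
        (Complex.exp (-(Complex.I * a₁ * θ)) * v₁) (Complex.exp (-(Complex.I * a₂ * θ)) * v₂)
      / Ucal a₁ a₂
        (Complex.exp (-(Complex.I * a₁ * θ)) * z) (Complex.exp (-(Complex.I * a₂ * θ)) * w)
      = kappaForm z w v₁ v₂ / Ucal a₁ a₂ z w := by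

  set E₁ := Complex.exp (-(Complex.I * a₁ * θ)) with hE₁
  set E₂ := Complex.exp (-(Complex.I * a₂ * θ)) with hE₂
  have key : ∀ a : ℕ, (starRingEnd ℂ) (Complex.exp (-(Complex.I * a * θ))) *
      Complex.exp (-(Complex.I * a * θ)) = 1 := by
    intro a
    rw [← Complex.exp_conj, ← Complex.exp_add]
    simp
  have k₁ := key a₁
  have k₂ := key a₂
  rw [← hE₁] at k₁
  rw [← hE₂] at k₂
  have hmul : E₁ * E₂ = Complex.exp (-(Complex.I * ((a₁ : ℂ) + a₂) * θ)) := by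
    rw [hE₁, hE₂, ← Complex.exp_add]
    ring_nf
  have hU : Ucal a₁ a₂ (E₁ * z) (E₂ * w) = Ucal a₁ a₂ z w := by
    unfold Ucal
    have h₁ : ((normSq (E₁ * z) : ℂ)) = normSq z := by
      rw [← Complex.mul_conj, ← Complex.mul_conj, map_mul]
      linear_combination (z * (starRingEnd ℂ) z) * k₁
    have h₂ : ((normSq (E₂ * w) : ℂ)) = normSq w := by
      rw [← Complex.mul_conj, ← Complex.mul_conj, map_mul]
      linear_combination (w * (starRingEnd ℂ) w) * k₂
    rw [h₁, h₂]
  have hK : kappaForm (E₁ * z) (E₂ * w) (E₁ * v₁) (E₂ * v₂) = kappaForm z w v₁ v₂ := by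
    unfold kappaForm
    rw [map_mul, map_mul]
    linear_combination Complex.I * ((starRingEnd ℂ) z * v₁) * k₁ +
      Complex.I * ((starRingEnd ℂ) w * v₂) * k₂
  refine ⟨?_, by rw [hK, hU]⟩
  unfold omegaForm Vcal phiForm
  rw [hU, hK, ← hmul]
  ring
end

section
/- Given a positive Weyl structure [(g,θ)] in natural gauge (K_g − δ_gθ = 1) on an oriented 2-orbifold, the coframing χ = π*(⋆_gθ) − ζ, η = −β, ν = −α on the unit tangent bundle satisfies the generalized Finsler structure equations dχ = −η∧ν, dη = −ν∧(χ − Iη), dν = −(χ − Jν)∧η with I = −θ and J = Z(θ) (viewing θ as a function on the unit tangent bundle via θ ↦ θ(direction)). -/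
/-- Given a positive Weyl structure `[(g,θ)]` in natural gauge
(`K_g − δ_g θ = 1`) on an oriented 2-orbifold `O`, the coframing
`χ = π^*(⋆_g θ) − ζ`, `η = −β`, `ν = −α` on the unit tangent bundle `Σ = SO` satisfies the
generalized Finsler structure equations with `K = 1`, `I = −θ` and `J = Z(θ)` (viewing `θ`
as the fibrewise function `v ↦ θ(v)` on `SO`, with `Z` the vertical vector field):
`dχ = −η∧ν`, `dη = −ν∧(χ − Iη)`, `dν = −(χ − Jν)∧η`.

Setup: `X` is the unit tangent bundle, `Ω1`, `Ω2` are the `C^∞(X) = (X → ℝ)`-modules of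
1- and 2-forms, `d` the exterior derivative and `wedge` the wedge product.
`α, β, ζ` is the canonical coframing with `dα = −β∧ζ`, `dβ = −ζ∧α`,
`dζ = −(K_g∘π) α∧β`; `σθ := π^*(⋆_g θ) = −Z(θ) α + θ β` satisfies
`dσθ = −(δ_gθ∘π) α∧β`; and the natural gauge condition is `(K_g − δ_gθ)∘π = 1`. -/
theorem natural_gauge_gives_generalized_finsler_structure
    {X : Type*} {Ω1 Ω2 : Type*}
    [AddCommGroup Ω1] [AddCommGroup Ω2]
    [Module (X → ℝ) Ω1] [Module (X → ℝ) Ω2]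
    (d : Ω1 →+ Ω2)
    (wedge : Ω1 → Ω1 → Ω2)
    (hw_add_l : ∀ a b c, wedge (a + b) c = wedge a c + wedge b c)
    (hw_add_r : ∀ a b c, wedge a (b + c) = wedge a b + wedge a c)
    (hw_smul_l : ∀ (f : X → ℝ) a b, wedge (f • a) b = f • wedge a b)
    (hw_smul_r : ∀ (f : X → ℝ) a b, wedge a (f • b) = f • wedge a b)
    (hw_alt : ∀ a, wedge a a = 0)
    (α β ζ σθ : Ω1) (KgS dthS θf Zθf : X → ℝ)
    (hdα : d α = -wedge β ζ)
    (hdβ : d β = -wedge ζ α)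
    (hdζ : d ζ = -(KgS • wedge α β))
    (hdσ : d σθ = -(dthS • wedge α β))
    (hσ : σθ = -(Zθf • α) + θf • β)
    (hgauge : ∀ x, KgS x - dthS x = 1) :
    d (σθ - ζ) = -wedge (-β) (-α) ∧
    d (-β) = -wedge (-α) ((σθ - ζ) - (-θf) • (-β)) ∧
    d (-α) = -wedge ((σθ - ζ) - Zθf • (-α)) (-β) := by
  have hneg_l : ∀ a b : Ω1, wedge (-a) b = -wedge a b := by
    intro a b
    rw [show (-a : Ω1) = (-1 : X → ℝ) • a by rw [neg_one_smul], hw_smul_l, neg_one_smul]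
  have hneg_r : ∀ a b : Ω1, wedge a (-b) = -wedge a b := by
    intro a b
    rw [show (-b : Ω1) = (-1 : X → ℝ) • b by rw [neg_one_smul], hw_smul_r, neg_one_smul]
  have hanti : ∀ a b : Ω1, wedge a b = -wedge b a := by
    intro a b
    have h := hw_alt (a + b)
    rw [hw_add_l, hw_add_r, hw_add_r, hw_alt, hw_alt, zero_add, add_zero] at h
    exact eq_neg_of_add_eq_zero_left h
  have hgauge' : KgS - dthS = (1 : X → ℝ) := funext hgauge
  refine ⟨?_, ?_, ?_⟩
  · rw [map_sub, hdσ, hdζ, hneg_l, hneg_r, neg_neg, hanti β α, neg_neg,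
      neg_sub_neg, ← sub_smul, hgauge', one_smul]
  · have h2 : (σθ - ζ) - (-θf) • (-β) = -(Zθf • α) + -ζ := by
      rw [hσ, neg_smul_neg]; abel
    rw [map_neg, hdβ, h2, hneg_l, hw_add_r, hneg_r, hneg_r, hw_smul_r, hw_alt,
      smul_zero, hanti ζ α]
    abel
  · have h3 : (σθ - ζ) - Zθf • (-α) = θf • β + -ζ := by
      rw [hσ, smul_neg]; abel
    rw [map_neg, hdα, h3, hneg_r, neg_neg, hw_add_l, hneg_l, hw_smul_l, hw_alt,
      smul_zero, hanti ζ β]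
    abel
end

section
/- On a 3-manifold carrying a generalized Finsler structure (χ,η,ν) with K ≡ 1, i.e. satisfying dχ = −η∧ν, dη = −ν∧(χ−Iη), dν = −(χ−Jν)∧η, the Bianchi identities d²η = 0 and d²ν = 0 force XI = J and XJ = −I, where X is the vector field dual to χ in the coframing (χ,η,ν); consequently the 1-form Iη + Jν is invariant under the flow of X: L_X(Iη + Jν) = 0. -/
/-- On a 3-manifold `Σ` carrying a generalized Finsler structure
`(χ,η,ν)` with `K ≡ 1`, i.e. satisfying `dχ = −η∧ν`, `dη = −ν∧(χ−Iη)`,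
`dν = −(χ−Jν)∧η`, the Bianchi identities `d²η = 0` and `d²ν = 0` force `XI = J` and
`XJ = −I`, where `X` is the vector field dual to `χ`; consequently the 1-form `Iη + Jν`
is invariant under the flow of `X`: `L_X(Iη + Jν) = i_X d(Iη + Jν) + d(i_X(Iη + Jν)) = 0`.

Setup: `C := Y → ℝ` is the ring of smooth functions on the 3-manifold `Y`, `Ω1, Ω2, Ω3`
the `C`-modules of forms, `d0, d1, d2` the exterior derivatives, `w11 : Ω1 → Ω1 → Ω2` and
`w12 : Ω1 → Ω2 → Ω3` the wedge products (bilinear over `C`, with the usual alternating and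
graded-commutativity identities and Leibniz rules, and `d ∘ d = 0`).  The coframing
`(χ,η,ν)` has dual framing `(X,H,V)`, encoded by the expansion
`d0 f = (Xf f)•χ + (Hf f)•η + (Vf f)•ν` together with nondegeneracy of the volume form
`χ∧η∧ν` (`hvol`).  `evalX` is evaluation of a 1-form on `X` and `iX` the interior product
of `X` on 2-forms. -/
theorem bianchi_identities_and_invariance_of_I_eta_plus_J_nu
    {Y : Type*} {Ω1 Ω2 Ω3 : Type*}
    [AddCommGroup Ω1] [AddCommGroup Ω2] [AddCommGroup Ω3]
    [Module (Y → ℝ) Ω1] [Module (Y → ℝ) Ω2] [Module (Y → ℝ) Ω3]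
    (d0 : (Y → ℝ) →+ Ω1) (d1 : Ω1 →+ Ω2) (d2 : Ω2 →+ Ω3)
    (w11 : Ω1 → Ω1 → Ω2) (w12 : Ω1 → Ω2 → Ω3)
    -- bilinearity of the wedge products over C = Y → ℝ
    (hw11_add_l : ∀ a b c, w11 (a + b) c = w11 a c + w11 b c)
    (hw11_add_r : ∀ a b c, w11 a (b + c) = w11 a b + w11 a c)
    (hw11_smul_l : ∀ (f : Y → ℝ) a b, w11 (f • a) b = f • w11 a b)
    (hw11_smul_r : ∀ (f : Y → ℝ) a b, w11 a (f • b) = f • w11 a b)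
    (hw11_alt : ∀ a, w11 a a = 0)
    (hw12_add_l : ∀ a u v, w12 (a + u) v = w12 a v + w12 u v)
    (hw12_add_r : ∀ a u v, w12 a (u + v) = w12 a u + w12 a v)
    (hw12_smul_l : ∀ (f : Y → ℝ) a u, w12 (f • a) u = f • w12 a u)
    (hw12_smul_r : ∀ (f : Y → ℝ) a u, w12 a (f • u) = f • w12 a u)
    -- alternating and cyclic identities for triple wedge products of 1-forms
    (hw12_alt : ∀ a b, w12 a (w11 a b) = 0)
    (hw12_cyc : ∀ a b c, w12 a (w11 b c) = w12 b (w11 c a))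
    -- Leibniz rules
    (hLeib1 : ∀ (f : Y → ℝ) (a : Ω1), d1 (f • a) = w11 (d0 f) a + f • d1 a)
    (hLeib2 : ∀ a b : Ω1, d2 (w11 a b) = w12 b (d1 a) - w12 a (d1 b))
    -- d² = 0
    (hdd : ∀ a : Ω1, d2 (d1 a) = 0)
    -- the coframing and the dual framing
    (χ η ν : Ω1) (I J : Y → ℝ) (Xf Hf Vf : (Y → ℝ) → Y → ℝ)
    (hframe : ∀ f : Y → ℝ, d0 f = Xf f • χ + Hf f • η + Vf f • ν)
    (hvol : ∀ f : Y → ℝ, f • w12 χ (w11 η ν) = 0 → f = 0)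
    -- the structure equations with K = 1
    (hdχ : d1 χ = -w11 η ν)
    (hdη : d1 η = -w11 ν (χ - I • η))
    (hdν : d1 ν = -w11 (χ - J • ν) η)
    -- evaluation on X and interior product of X
    (evalX : Ω1 → Y → ℝ) (iX : Ω2 → Ω1)
    (hevalχ : evalX χ = 1) (hevalη : evalX η = 0) (hevalν : evalX ν = 0)
    (heval_add : ∀ a b, evalX (a + b) = evalX a + evalX b)
    (heval_smul : ∀ (f : Y → ℝ) a, evalX (f • a) = f * evalX a)
    (hiX_add : ∀ u v, iX (u + v) = iX u + iX v)
    (hiX_smul : ∀ (f : Y → ℝ) u, iX (f • u) = f • iX u)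
    (hiX_wedge : ∀ a b, iX (w11 a b) = evalX a • b - evalX b • a) :
    Xf I = J ∧ Xf J = -I ∧
    iX (d1 (I • η + J • ν)) + d0 (evalX (I • η + J • ν)) = 0 := by

  -- auxiliary algebraic facts
  have hw11_zero_r : ∀ a, w11 a (0 : Ω1) = 0 := by
    intro a
    have h : w11 a ((0 : Y → ℝ) • (0 : Ω1)) = (0 : Y → ℝ) • w11 a (0 : Ω1) :=
      hw11_smul_r 0 a 0
    simpa using h
  have hw11_neg_r : ∀ a b, w11 a (-b) = -w11 a b := by
    intro a b
    have h : w11 a ((-1 : Y → ℝ) • b) = (-1 : Y → ℝ) • w11 a b := hw11_smul_r _ a b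
    simpa [neg_one_smul] using h
  have hw11_sub_r : ∀ a b c, w11 a (b - c) = w11 a b - w11 a c := by
    intro a b c
    rw [sub_eq_add_neg, hw11_add_r, hw11_neg_r, sub_eq_add_neg]
  have hw11_neg_l : ∀ a b, w11 (-a) b = -w11 a b := by
    intro a b
    have h : w11 ((-1 : Y → ℝ) • a) b = (-1 : Y → ℝ) • w11 a b := hw11_smul_l _ a b
    simpa [neg_one_smul] using h
  have hw11_sub_l : ∀ a b c, w11 (a - b) c = w11 a c - w11 b c := by
    intro a b c
    rw [sub_eq_add_neg, hw11_add_l, hw11_neg_l, sub_eq_add_neg]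
  have hw11_anti : ∀ a b, w11 a b = -w11 b a := by
    intro a b
    have h := hw11_alt (a + b)
    rw [hw11_add_l, hw11_add_r, hw11_add_r, hw11_alt, hw11_alt] at h
    have h' : w11 a b + w11 b a = 0 := by
      calc w11 a b + w11 b a = 0 + w11 a b + (w11 b a + 0) := by abel
        _ = 0 := h
    exact eq_neg_of_add_eq_zero_left h'
  have hw12_zero_r : ∀ a, w12 a (0 : Ω2) = 0 := by
    intro a
    have h : w12 a ((0 : Y → ℝ) • (0 : Ω2)) = (0 : Y → ℝ) • w12 a (0 : Ω2) :=
      hw12_smul_r 0 a 0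
    simpa using h
  have hw12_neg_r : ∀ a u, w12 a (-u) = -w12 a u := by
    intro a u
    have h : w12 a ((-1 : Y → ℝ) • u) = (-1 : Y → ℝ) • w12 a u := hw12_smul_r _ a u
    simpa [neg_one_smul] using h
  have hw12_alt' : ∀ a b, w12 a (w11 b a) = 0 := by
    intro a b
    rw [hw12_cyc a b a, hw11_alt, hw12_zero_r]
  have hiX_neg : ∀ u, iX (-u) = -iX u := by
    intro u
    have h : iX ((-1 : Y → ℝ) • u) = (-1 : Y → ℝ) • iX u := hiX_smul _ u
    simpa [neg_one_smul] using h
  set Ω : Ω3 := w12 χ (w11 η ν) with hΩ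
  -- expanded structure equations
  have hdη' : d1 η = -w11 ν χ + I • w11 ν η := by
    rw [hdη, hw11_sub_r, hw11_smul_r]; abel
  have hdν' : d1 ν = -w11 χ η + J • w11 ν η := by
    rw [hdν, hw11_sub_l, hw11_smul_l, hw11_anti ν η]; abel
  have hνη : w12 χ (w11 ν η) = -Ω := by
    rw [hw11_anti ν η, hw12_neg_r]
  -- key wedge computations
  have F1 : w12 χ (d1 ν) = -(J • Ω) := by
    rw [hdν', hw12_add_r, hw12_neg_r, hw12_alt, hw12_smul_r, hνη, smul_neg]
    abel
  have F2 : w12 ν (d1 χ) = 0 := by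
    rw [hdχ, hw12_neg_r, hw12_cyc ν η ν, hw11_alt, hw12_zero_r, neg_zero]
  have Fgen3 : ∀ f : Y → ℝ, w12 η (d1 (f • ν)) = -(Xf f • Ω) := by
    intro f
    rw [hLeib1, hw12_add_r]
    have hA : w12 η (w11 (d0 f) ν) = -(Xf f • Ω) := by
      rw [hframe f, hw11_add_l, hw11_add_l, hw11_smul_l, hw11_smul_l, hw11_smul_l,
        hw11_alt, smul_zero, add_zero, hw12_add_r, hw12_smul_r, hw12_smul_r,
        hw12_alt, smul_zero, add_zero, hw12_cyc η χ ν, hνη, smul_neg]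
    have hB : w12 η (f • d1 ν) = 0 := by
      rw [hw12_smul_r, hdν', hw12_add_r, hw12_neg_r, hw12_smul_r,
        hw12_alt' η χ, hw12_alt' η ν, smul_zero, neg_zero, zero_add, smul_zero]
    rw [hA, hB, add_zero]
  have Fgen4 : ∀ f : Y → ℝ, w12 (f • ν) (d1 η) = 0 := by
    intro f
    rw [hw12_smul_l, hdη', hw12_add_r, hw12_neg_r, hw12_smul_r,
      hw12_alt, hw12_alt, neg_zero, smul_zero, add_zero, smul_zero]
  -- Bianchi identity for η : forces Xf I = J
  have hBη := hdd η
  rw [hdη', map_add, map_neg, ← hw11_smul_l I ν η, hLeib2, hLeib2,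
    F1, F2, Fgen3 I, Fgen4 I] at hBη
  have h1 : (J - Xf I) • Ω = 0 := by
    calc (J - Xf I) • Ω = -(-(J • Ω) - 0) + (-(Xf I • Ω) - 0) := by
          rw [sub_smul]; abel
      _ = 0 := hBη
  have hXI : Xf I = J := (sub_eq_zero.mp (hvol _ h1)).symm
  -- Bianchi identity for ν : forces Xf J = -I
  have G1 : w12 η (d1 χ) = 0 := by
    rw [hdχ, hw12_neg_r, hw12_alt, neg_zero]
  have G2 : w12 χ (d1 η) = -(I • Ω) := by
    rw [hdη', hw12_add_r, hw12_neg_r, hw12_alt' χ ν, hw12_smul_r, hνη, smul_neg]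
    abel
  have hBν := hdd ν
  rw [hdν', map_add, map_neg, ← hw11_smul_l J ν η, hLeib2, hLeib2,
    G1, G2, Fgen3 J, Fgen4 J] at hBν
  have h2 : (-I - Xf J) • Ω = 0 := by
    calc (-I - Xf J) • Ω = -(0 - -(I • Ω)) + (-(Xf J • Ω) - 0) := by
          rw [sub_smul, neg_smul]; abel
      _ = 0 := hBν
  have hXJ : Xf J = -I := (sub_eq_zero.mp (hvol _ h2)).symm
  refine ⟨hXI, hXJ, ?_⟩
  -- the Lie derivative computation
  have hevalD : ∀ f : Y → ℝ, evalX (d0 f) = Xf f := by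
    intro f
    rw [hframe, heval_add, heval_add, heval_smul, heval_smul, heval_smul,
      hevalχ, hevalη, hevalν]
    ring
  have heval0 : evalX (I • η + J • ν) = 0 := by
    rw [heval_add, heval_smul, heval_smul, hevalη, hevalν]; ring
  have hiXdη : iX (d1 η) = ν := by
    rw [hdη', hiX_add, hiX_neg, hiX_smul, hiX_wedge, hiX_wedge, hevalν, hevalχ, hevalη]
    simp
  have hiXdν : iX (d1 ν) = -η := by
    rw [hdν', hiX_add, hiX_neg, hiX_smul, hiX_wedge, hiX_wedge, hevalν, hevalχ, hevalη]
    simp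
  rw [heval0, map_zero, add_zero, map_add, hLeib1, hLeib1, hiX_add, hiX_add, hiX_add,
    hiX_smul, hiX_smul, hiX_wedge, hiX_wedge, hiXdη, hiXdν, hevalD, hevalD, hXI, hXJ,
    hevalη, hevalν]
  simp only [zero_smul, sub_zero, neg_smul, smul_neg]
  abel
end
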